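/- arXiv:2106.02033 — 3 statements merged into one kernel-verified Lean document; each statement's English description precedes it below -/
import Mathlib

section
/- Let ζ = e^{2πi/17} and ξ_k = ζ^k + ζ^{−k}. Let M₂ be the 9×9 complex matrix equal to (−1/√17) times the matrix whose first row is (1,1,1,1,1,1,1,1,1), whose first column below the top entry is all 2's, and whose lower-right 8×8 block is the circulant with first row (ξ₃, ξ₈, ξ₇, ξ₄, ξ₅, ξ₂, ξ₆, ξ₁) (each subsequent row cyclically shifted left by one). Then the quadratic form Q(x₀,…,x₈) = x₀² + x₁x₅ + x₂x₆ + x₃x₇ + x₄x₈ satisfies Q(M₂·x) = Q(x) for all x ∈ ℂ⁹. -/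
/-!
Let `ψ(a) = ζ^a` be the additive character of `ℤ/17` and `ξ_a = ψ(a) + ψ(-a)`. Since `3` is a
primitive root mod `17` with `3⁸ = -1`, the circulant block of `M₂` has entries `ξ_{3^(i+j+1)}`.
Invariance of `Q` amounts to `Nᵀ H N = 17 H`, for `N = -√17 M₂` and `H` the Gram matrix of `2Q`.
By `ξ_s ξ_t = ξ_{s+t} + ξ_{s-t}`, every entry of `Nᵀ H N` reduces to Gauss periods
`∑_{a<8} ξ_{3^a w}`, which are `16` for `w = 0` and `-1` otherwise, because the character sum
over `ℤ/17` vanishes.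
-/

open Matrix AddChar

namespace AddChar

section

variable {G R : Type*} [AddCommGroup G] [CommRing R] (ψ : AddChar G R)

/-- For `ψ a = ζ ^ a` this is the paper's `ξ_a = ζ^a + ζ^{-a}`. -/
def xi (a : G) : R := ψ a + ψ (-a)

lemma xi_neg (a : G) : ψ.xi (-a) = ψ.xi a := by
  rw [xi, xi, neg_neg, add_comm]

lemma xi_eq_of_eq_or_eq_neg {a b : G} (h : a = b ∨ a = -b) : ψ.xi a = ψ.xi b := by
  rcases h with rfl | rfl
  · rfl
  · exact ψ.xi_neg b

lemma xi_zero : ψ.xi 0 = 2 := by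
  rw [xi, neg_zero, map_zero_eq_one]
  norm_num

lemma xi_mul_xi (a b : G) : ψ.xi a * ψ.xi b = ψ.xi (a + b) + ψ.xi (a - b) := by
  simp only [xi, neg_add, neg_neg, sub_eq_add_neg, map_add_eq_mul]
  ring

end

lemma xi_zmodChar_natCast {K : Type*} [Field K] {n : ℕ} [NeZero n] {ζ : K} (hζ : ζ ^ n = 1)
    (k : ℕ) : (zmodChar n hζ).xi (k : ZMod n) = ζ ^ k + ζ ^ (-(k : ℤ)) := by
  rw [xi, map_neg_eq_inv, zmodChar_apply', _root_.zpow_neg, zpow_natCast]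

end AddChar

instance fact_prime_seventeen : Fact (Nat.Prime 17) := ⟨by norm_num⟩

/-- `3` is a primitive root modulo `17` and `3 ^ 8 = -1`, so `±3 ^ a` (`a < 8`) are the nonzero
residues. -/
lemma ZMod.sum_seventeen_eq_sum_three_pow {M : Type*} [AddCommMonoid M] (h : ZMod 17 → M) :
    ∑ c, h c = h 0 + ∑ a : Fin 8, (h (3 ^ (a : ℕ)) + h (-3 ^ (a : ℕ))) := by
  let e : Option (Fin 8 ⊕ Fin 8) → ZMod 17 :=
    fun o => o.elim 0 (Sum.elim (fun a => 3 ^ (a : ℕ)) fun a => -3 ^ (a : ℕ))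
  have he : e.Bijective := by decide
  rw [← Fintype.sum_bijective e he _ _ fun _ => rfl, Fintype.sum_option, Fintype.sum_sum_type,
    Finset.sum_add_distrib]
  rfl

lemma ZMod.three_pow_add_eq_zero_or_sub_eq_zero_iff (j k : Fin 8) :
    ((3 : ZMod 17) ^ (4 + ((j : ℕ) + 1)) + 3 ^ ((k : ℕ) + 1) = 0 ∨
      (3 : ZMod 17) ^ (4 + ((j : ℕ) + 1)) - 3 ^ ((k : ℕ) + 1) = 0 ↔ k = j + 4) ∧
    ¬ ((3 : ZMod 17) ^ (4 + ((j : ℕ) + 1)) + 3 ^ ((k : ℕ) + 1) = 0 ∧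
      (3 : ZMod 17) ^ (4 + ((j : ℕ) + 1)) - 3 ^ ((k : ℕ) + 1) = 0) := by
  revert j k
  decide

section GaussPeriods

variable {R : Type*} [CommRing R] {ψ : AddChar (ZMod 17) R}

lemma xi_three_pow_mod (m n : ℕ) : ψ.xi (3 ^ (m % 8 + n)) = ψ.xi (3 ^ (m + n)) := by
  have h : (3 : ZMod 17) ^ (m + n) = (-1) ^ (m / 8) * 3 ^ (m % 8 + n) := by
    conv_lhs => rw [← Nat.div_add_mod m 8]
    rw [add_assoc, pow_add, pow_mul, show (3 : ZMod 17) ^ 8 = -1 by decide]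
  rw [h]
  rcases neg_one_pow_eq_or (ZMod 17) (m / 8) with h | h <;>
    simp only [h, one_mul, neg_one_mul, xi_neg]

lemma xi_three_pow_fin_add_four (a : Fin 8) (n : ℕ) :
    ψ.xi (3 ^ (((a + 4 : Fin 8) : ℕ) + n)) = ψ.xi (3 ^ ((a : ℕ) + (4 + n))) := by
  rw [Fin.val_add, xi_three_pow_mod, show ((4 : Fin 8) : ℕ) = 4 from rfl, add_assoc]

variable [IsDomain R]

lemma sum_xi_three_pow_mul (hψ : ψ.IsPrimitive) (w : ZMod 17) :
    ∑ a : Fin 8, ψ.xi (3 ^ (a : ℕ) * w) = if w = 0 then 16 else -1 := by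
  have h := sum_mulShift w hψ
  rw [ZMod.sum_seventeen_eq_sum_three_pow] at h
  simp only [zero_mul, map_zero_eq_one, neg_mul] at h
  split_ifs at h ⊢ with hw
  · simp only [hw, mul_zero, xi_zero, Finset.sum_const, Finset.card_univ, Fintype.card_fin]
    norm_num
  · simp only [xi]
    linear_combination h

lemma sum_xi_three_pow_add (hψ : ψ.IsPrimitive) (n : ℕ) :
    ∑ a : Fin 8, ψ.xi (3 ^ ((a : ℕ) + n)) = -1 := by
  simp_rw [pow_add]
  rw [sum_xi_three_pow_mul hψ, if_neg (pow_ne_zero _ (by decide))]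

lemma sum_xi_three_pow_add_mul (hψ : ψ.IsPrimitive) (m n : ℕ) :
    ∑ a : Fin 8, ψ.xi (3 ^ ((a : ℕ) + m)) * ψ.xi (3 ^ ((a : ℕ) + n)) =
      (if (3 : ZMod 17) ^ m + 3 ^ n = 0 then 16 else -1) +
        (if (3 : ZMod 17) ^ m - 3 ^ n = 0 then 16 else -1) := by
  simp_rw [pow_add, xi_mul_xi, ← mul_add, ← mul_sub, Finset.sum_add_distrib,
    sum_xi_three_pow_mul hψ]

lemma sum_xi_shift_mul_xi (hψ : ψ.IsPrimitive) (j k : Fin 8) :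
    2 + ∑ a : Fin 8, ψ.xi (3 ^ (((a + 4 : Fin 8) : ℕ) + j + 1)) * ψ.xi (3 ^ ((a : ℕ) + k + 1)) =
      if k = j + 4 then 17 else 0 := by
  simp_rw [add_assoc _ _ 1, xi_three_pow_fin_add_four, sum_xi_three_pow_add_mul hψ]
  obtain ⟨hiff, hboth⟩ := ZMod.three_pow_add_eq_zero_or_sub_eq_zero_iff j k
  split_ifs <;> first | tauto | norm_num

end GaussPeriods

section Matrices

variable {R : Type*} [CommRing R]

/-- `-√17 • M₂`: the powers `3 ^ (n + 1)` are `±3, ±8, ±7, ±4, ±5, ±2, ±6, ±1` mod `17`, which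
is the first row of the circulant block. -/
def periodMatrix (ψ : AddChar (ZMod 17) R) : Matrix (Fin 9) (Fin 9) R :=
  Matrix.of (Fin.cons (fun _ => 1) fun i => Fin.cons 2 fun j => ψ.xi (3 ^ ((i : ℕ) + j + 1)))

def splitFormMatrix : Matrix (Fin 9) (Fin 9) R :=
  Matrix.of (Fin.cons (Fin.cons 2 0) fun a => Fin.cons 0 fun b => if b = a + 4 then 1 else 0)

def splitForm (x : Fin 9 → R) : R := x 0 ^ 2 + x 1 * x 5 + x 2 * x 6 + x 3 * x 7 + x 4 * x 8

lemma two_mul_splitForm (x : Fin 9 → R) : 2 * splitForm x = x ⬝ᵥ splitFormMatrix *ᵥ x := by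
  simp only [splitForm, splitFormMatrix, dotProduct, mulVec, Fin.sum_univ_succ, of_apply,
    Fin.cons_zero, Fin.cons_succ]
  simp only [Fin.isValue, Pi.zero_apply, Fin.succ_zero_eq_one, zero_mul, Fin.succ_one_eq_two,
    Fin.reduceSucc, Finset.univ_eq_empty, Finset.sum_const_zero, add_zero, zero_add, Fin.reduceEq,
    ↓reduceIte, one_mul, ite_mul, Finset.sum_empty, Fin.reduceAdd, one_ne_zero, Fin.succ_ne_zero,
    zero_ne_one, right_eq_add]
  ring

lemma Fin.eq_add_four_comm (a b : Fin 8) : a = b + 4 ↔ b = a + 4 := by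
  revert a b
  decide

lemma Matrix.dotProduct_mulVec_mulVec_of_transpose_mul_mul {n : Type*} [Fintype n]
    {M H : Matrix n n R} (h : Mᵀ * H * M = H) (x : n → R) :
    M *ᵥ x ⬝ᵥ H *ᵥ (M *ᵥ x) = x ⬝ᵥ H *ᵥ x := by
  conv_rhs => rw [← h]
  rw [← mulVec_mulVec, ← mulVec_mulVec, dotProduct_mulVec x Mᵀ, vecMul_transpose]

theorem periodMatrix_transpose_mul_mul [IsDomain R] {ψ : AddChar (ZMod 17) R}
    (hψ : ψ.IsPrimitive) :
    (periodMatrix ψ)ᵀ * splitFormMatrix * periodMatrix ψ = (17 : R) • splitFormMatrix := by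
  ext i j
  simp only [Matrix.mul_apply, Fin.sum_univ_succ (n := 8), transpose_apply, periodMatrix,
    splitFormMatrix, of_apply, Matrix.smul_apply, smul_eq_mul]
  induction i using Fin.cases <;> induction j using Fin.cases <;>
    simp only [Fin.cons_zero, Fin.cons_succ, one_mul, mul_one, mul_zero, add_zero, zero_add,
      Pi.zero_apply, Finset.sum_const_zero, Fin.eq_add_four_comm _ (_ : Fin 8), mul_ite,
      Finset.sum_ite_eq', Finset.mem_univ, if_true]
  case zero.zero =>
    simp only [Finset.sum_const, Finset.card_univ, Fintype.card_fin, nsmul_eq_mul]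
    norm_num
  case zero.succ k =>
    simp_rw [← Finset.mul_sum, add_assoc _ (k : ℕ), sum_xi_three_pow_add hψ]
    ring
  case succ.zero j =>
    simp_rw [← Finset.sum_mul, add_assoc _ (j : ℕ), xi_three_pow_fin_add_four,
      sum_xi_three_pow_add hψ]
    ring
  case succ.succ j k => exact sum_xi_shift_mul_xi hψ j k

lemma periodMatrix_eq {ξ : ℕ → R} {ψ : AddChar (ZMod 17) R} (hξ : ∀ k, ξ k = ψ.xi k) :
    periodMatrix ψ =
      !![1,   1,   1,   1,   1,   1,   1,   1,   1;
         2, ξ 3, ξ 8, ξ 7, ξ 4, ξ 5, ξ 2, ξ 6, ξ 1;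
         2, ξ 8, ξ 7, ξ 4, ξ 5, ξ 2, ξ 6, ξ 1, ξ 3;
         2, ξ 7, ξ 4, ξ 5, ξ 2, ξ 6, ξ 1, ξ 3, ξ 8;
         2, ξ 4, ξ 5, ξ 2, ξ 6, ξ 1, ξ 3, ξ 8, ξ 7;
         2, ξ 5, ξ 2, ξ 6, ξ 1, ξ 3, ξ 8, ξ 7, ξ 4;
         2, ξ 2, ξ 6, ξ 1, ξ 3, ξ 8, ξ 7, ξ 4, ξ 5;
         2, ξ 6, ξ 1, ξ 3, ξ 8, ξ 7, ξ 4, ξ 5, ξ 2;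
         2, ξ 1, ξ 3, ξ 8, ξ 7, ξ 4, ξ 5, ξ 2, ξ 6] := by
  ext i j
  fin_cases i <;> fin_cases j <;>
    first | rfl | exact (ψ.xi_eq_of_eq_or_eq_neg (by decide)).trans (hξ _).symm

end Matrices

/-- The quadratic form `Q(x₀,…,x₈) = x₀² + x₁x₅ + x₂x₆ + x₃x₇ + x₄x₈` is
invariant under the matrix `M₂`. -/
theorem Q_invariant_M2 (ζ : ℂ) (hζ : ζ = Complex.exp (2 * Real.pi * Complex.I / 17))
    (ξ : ℕ → ℂ) (hξ : ∀ k, ξ k = ζ ^ k + ζ ^ (-(k : ℤ)))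
    (M : Matrix (Fin 9) (Fin 9) ℂ)
    (hM : M = ((-1 : ℂ) / (Real.sqrt 17 : ℂ)) •
      !![1,   1,   1,   1,   1,   1,   1,   1,   1;
         2, ξ 3, ξ 8, ξ 7, ξ 4, ξ 5, ξ 2, ξ 6, ξ 1;
         2, ξ 8, ξ 7, ξ 4, ξ 5, ξ 2, ξ 6, ξ 1, ξ 3;
         2, ξ 7, ξ 4, ξ 5, ξ 2, ξ 6, ξ 1, ξ 3, ξ 8;
         2, ξ 4, ξ 5, ξ 2, ξ 6, ξ 1, ξ 3, ξ 8, ξ 7;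
         2, ξ 5, ξ 2, ξ 6, ξ 1, ξ 3, ξ 8, ξ 7, ξ 4;
         2, ξ 2, ξ 6, ξ 1, ξ 3, ξ 8, ξ 7, ξ 4, ξ 5;
         2, ξ 6, ξ 1, ξ 3, ξ 8, ξ 7, ξ 4, ξ 5, ξ 2;
         2, ξ 1, ξ 3, ξ 8, ξ 7, ξ 4, ξ 5, ξ 2, ξ 6]) :
    ∀ x : Fin 9 → ℂ,
      (M.mulVec x 0)^2 + (M.mulVec x 1) * (M.mulVec x 5)
        + (M.mulVec x 2) * (M.mulVec x 6) + (M.mulVec x 3) * (M.mulVec x 7)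
        + (M.mulVec x 4) * (M.mulVec x 8)
      = (x 0)^2 + (x 1) * (x 5) + (x 2) * (x 6) + (x 3) * (x 7)
        + (x 4) * (x 8) := by
  have hprim : IsPrimitiveRoot ζ 17 := by
    simpa [hζ] using Complex.isPrimitiveRoot_exp 17 (by norm_num)
  set ψ := zmodChar 17 hprim.pow_eq_one
  have hψ : ψ.IsPrimitive := zmodChar_primitive_of_primitive_root 17 hprim
  have hc : ((-1 : ℂ) / (Real.sqrt 17 : ℂ)) ^ 2 * 17 = 1 := by
    rw [div_pow, ← Complex.ofReal_pow, Real.sq_sqrt (by norm_num)]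
    norm_num
  have hinv : Mᵀ * splitFormMatrix * M = splitFormMatrix := by
    rw [hM, ← periodMatrix_eq fun k => (hξ k).trans (xi_zmodChar_natCast hprim.pow_eq_one k).symm,
      transpose_smul, Matrix.smul_mul, Matrix.smul_mul, Matrix.mul_smul, smul_smul,
      periodMatrix_transpose_mul_mul hψ, smul_smul, ← sq, hc, one_smul]
  intro x
  apply mul_left_cancel₀ (two_ne_zero' ℂ)
  change 2 * splitForm (M *ᵥ x) = 2 * splitForm x
  rw [two_mul_splitForm, two_mul_splitForm, dotProduct_mulVec_mulVec_of_transpose_mul_mul hinv]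
end

section
/- Let K be a field and T, u₁, u₂, u₃, u₄ ∈ K with u₂ ≠ 0 and u₄ ≠ 0. Suppose u₁u₂ + u₁u₃ + (T+1)u₂² − u₃u₄ = 0 and u₁u₄ + Tu₂² − T²u₂u₄ − Tu₃u₄ = 0. Set x = −Tu₁/u₄ and y = Tu₁(u₁ − u₂ − u₄)/(u₂u₄). Then y² + (T+1)(T−2)xy + T³y = x³ − x². -/
/-!
Both quadrics are linear in `u₃`; eliminating it (`T u₄ · e1 + (u₁ − u₄) · e2`) leaves a plane
cubic in `(u₁ : u₂ : u₄)`. The point `(−T u₁ u₂ : T u₁ (u₁ − u₂ − u₄) : u₂ u₄)` lies on the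
projective Weierstrass curve `Y²Z + (T+1)(T−2)XYZ + T³YZ² = X³ − X²Z` whenever this cubic vanishes,
and dehomogenizing at `Z = u₂ u₄ ≠ 0` gives exactly `(x, y)`.
-/

section

variable {R : Type*} [CommRing R]

def symplecticWeierstrassCurve (T : R) : WeierstrassCurve R :=
  ⟨(T + 1) * (T - 2), -1, T ^ 3, 0, 0⟩

theorem symplecticWeierstrassCurve_affine_equation_iff {T x y : R} :
    (symplecticWeierstrassCurve T).toAffine.Equation x y ↔
      y ^ 2 + (T + 1) * (T - 2) * x * y + T ^ 3 * y = x ^ 3 - x ^ 2 := by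
  rw [WeierstrassCurve.Affine.equation_iff]
  congr! 1
  simp [symplecticWeierstrassCurve, sub_eq_add_neg]

def quadricsPlaneCubic (T u₁ u₂ u₄ : R) : R :=
  T * u₄ * (u₁ * u₂ + (T + 1) * u₂ ^ 2) + (u₁ - u₄) * (u₁ * u₄ + T * u₂ ^ 2 - T ^ 2 * u₂ * u₄)

theorem quadricsPlaneCubic_eq_zero {T u₁ u₂ u₃ u₄ : R}
    (e1 : u₁ * u₂ + u₁ * u₃ + (T + 1) * u₂ ^ 2 - u₃ * u₄ = 0)
    (e2 : u₁ * u₄ + T * u₂ ^ 2 - T ^ 2 * u₂ * u₄ - T * u₃ * u₄ = 0) :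
    quadricsPlaneCubic T u₁ u₂ u₄ = 0 := by
  unfold quadricsPlaneCubic
  linear_combination T * u₄ * e1 + (u₁ - u₄) * e2

theorem symplecticWeierstrassCurve_equation_of_quadricsPlaneCubic {T u₁ u₂ u₄ : R}
    (h : quadricsPlaneCubic T u₁ u₂ u₄ = 0) :
    (symplecticWeierstrassCurve T).toProjective.Equation
      ![-T * u₁ * u₂, T * u₁ * (u₁ - u₂ - u₄), u₂ * u₄] := by
  rw [WeierstrassCurve.Projective.equation_iff]
  simp only [Matrix.cons_val, Matrix.cons_val_zero, Matrix.cons_val_one, symplecticWeierstrassCurve]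
  unfold quadricsPlaneCubic at h
  -- the Weierstrass polynomial at this point is `T² u₁ u₂ (u₁ − u₄)` times the plane cubic
  linear_combination T ^ 2 * u₁ * u₂ * (u₁ - u₄) * h

end

/-- The map from the symplectic quadric intersection to the Weierstrass curve
`y² + (T+1)(T−2)xy + T³y = x³ − x²`. -/
theorem symplectic_quadrics_to_weierstrass (K : Type*) [Field K]
    (T u₁ u₂ u₃ u₄ : K) (h₂ : u₂ ≠ 0) (h₄ : u₄ ≠ 0)
    (e1 : u₁*u₂ + u₁*u₃ + (T+1)*u₂^2 - u₃*u₄ = 0)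
    (e2 : u₁*u₄ + T*u₂^2 - T^2*u₂*u₄ - T*u₃*u₄ = 0)
    (x y : K) (hx : x = -T*u₁/u₄) (hy : y = T*u₁*(u₁ - u₂ - u₄)/(u₂*u₄)) :
    y^2 + (T+1)*(T-2)*x*y + T^3*y = x^3 - x^2 := by
  have hZ : u₂ * u₄ ≠ 0 := mul_ne_zero h₂ h₄
  have hproj := symplecticWeierstrassCurve_equation_of_quadricsPlaneCubic
    (quadricsPlaneCubic_eq_zero e1 e2)
  rw [WeierstrassCurve.Projective.equation_of_Z_ne_zero (by simpa using hZ)] at hproj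
  have hxP : ![-T * u₁ * u₂, T * u₁ * (u₁ - u₂ - u₄), u₂ * u₄] 0 /
      ![-T * u₁ * u₂, T * u₁ * (u₁ - u₂ - u₄), u₂ * u₄] 2 = x := by
    simp only [hx, Matrix.cons_val]
    field_simp
  have hyP : ![-T * u₁ * u₂, T * u₁ * (u₁ - u₂ - u₄), u₂ * u₄] 1 /
      ![-T * u₁ * u₂, T * u₁ * (u₁ - u₂ - u₄), u₂ * u₄] 2 = y := by
    simp only [hy, Matrix.cons_val]
  rwa [hxP, hyP, symplecticWeierstrassCurve_affine_equation_iff] at hproj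
end

section
/- Let K be a field and T, u₁, u₂, u₃, u₄ ∈ K with u₁ ≠ 0 and u₄ ≠ 0. Suppose u₁² + Tu₁u₂ + Tu₂u₃ − Tu₁u₄ = 0 and u₁u₃ + Tu₁u₄ + u₂u₄ + u₃u₄ = 0. Set x = T(u₁ + Tu₂)/u₄ and y = T(u₁ + Tu₂)²/(u₁u₄). Then y² + (T+1)(T−2)xy + T³y = x³ − x². -/
/-!
Put `s = u₁ + T u₂`. Eliminating `u₃` from the two quadrics, as `(u₁ + u₄) e1 - T u₂ e2`, leaves a
plane cubic in `(u₁ : s : u₄)`; call `-T` times it `quadricsCubic`. Clearing the denominator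
`u₁² u₄³` in the Weierstrass equation at `(x, y) = (T s / u₄, T s² / (u₁ u₄))` gives exactly
`T² s² · quadricsCubic`.
-/

def quadricsCubic {R : Type*} [CommRing R] (T u s w : R) : R :=
  s^2*w + (T+1)*(T-2)*s*u*w + T^2*u*w^2 - T*s*u^2 + u^2*w

theorem quadricsCubic_eq_zero {R : Type*} [CommRing R] {T u₁ u₂ u₃ u₄ : R}
    (e1 : u₁^2 + T*u₁*u₂ + T*u₂*u₃ - T*u₁*u₄ = 0)
    (e2 : u₁*u₃ + T*u₁*u₄ + u₂*u₄ + u₃*u₄ = 0) :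
    quadricsCubic T u₁ (u₁ + T*u₂) u₄ = 0 := by
  unfold quadricsCubic
  linear_combination (-T*(u₁ + u₄)) * e1 + (T^2*u₂) * e2

theorem weierstrass_of_quadricsCubic_eq_zero {K : Type*} [Field K] {T u s w : K}
    (hu : u ≠ 0) (hw : w ≠ 0) (h : quadricsCubic T u s w = 0) :
    (T*s^2/(u*w))^2 + (T+1)*(T-2)*(T*s/w)*(T*s^2/(u*w)) + T^3*(T*s^2/(u*w))
      = (T*s/w)^3 - (T*s/w)^2 := by
  unfold quadricsCubic at h
  field_simp
  linear_combination (T^2*s^2) * h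

/-- The map from the anti-symplectic quadric intersection to the Weierstrass
curve `y² + (T+1)(T−2)xy + T³y = x³ − x²`. -/
theorem antisymplectic_quadrics_to_weierstrass (K : Type*) [Field K]
    (T u₁ u₂ u₃ u₄ : K) (h₁ : u₁ ≠ 0) (h₄ : u₄ ≠ 0)
    (e1 : u₁^2 + T*u₁*u₂ + T*u₂*u₃ - T*u₁*u₄ = 0)
    (e2 : u₁*u₃ + T*u₁*u₄ + u₂*u₄ + u₃*u₄ = 0)
    (x y : K) (hx : x = T*(u₁ + T*u₂)/u₄) (hy : y = T*(u₁ + T*u₂)^2/(u₁*u₄)) :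
    y^2 + (T+1)*(T-2)*x*y + T^3*y = x^3 - x^2 := by
  subst hx hy
  exact weierstrass_of_quadricsCubic_eq_zero h₁ h₄ (quadricsCubic_eq_zero e1 e2)
end
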